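/- Let M have compound representation M = ∑_{i=1}^N X_i where N has pmf p̃(n) = Λ^{nα} E^{n+1}_{α,nα+1}(−Λ^α) (NTFPP marginal with Λ = ∑_{j=1}^k Λ_j) and X_i are i.i.d., independent of N, with P(X_1 = j) = Λ_j/Λ for j = 1,...,k. Then for j ≥ 1, P(M = j) = ∑_{r=0}^{j} ∑ multinomial(r; α_1,...,α_k) ∏_{s=1}^k Λ_s^{α_s} · Λ^{−r(1−α)} E^{r+1}_{α, rα+1}(−Λ^α), where the inner sum is over nonnegative integers α_1,...,α_k with α_1+···+α_k = r and α_1 + 2α_2 + ··· + kα_k = j. -/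

import Mathlib

/-!
Conditioning on `N = r` and using independence, `P(M = j) = ∑ r, P(N = r) P(X₁ + ⋯ + X_r = j)`,
where only `r ≤ j` contributes because every `Xᵢ ≥ 1`. The law of `X₁ + ⋯ + X_r` is the
coefficient of `z ^ j` in `(∑ v, (Λ_v / Λ) z ^ v) ^ r`, computed once by expanding the product and
once by the multinomial theorem.

The analytic input is that the values `Λ ^ (n α) E^{n+1}_{α,nα+1}(-Λ ^ α)` prescribed for
`P(N = n)` are nonnegative reals, so that `ENNReal.ofReal` commutes with the sums. They are the row
sums of the absolutely summable double series `∑ C(n+l, n) yⁿ (-y)ˡ / Γ(α(n+l)+1)`, `y = Λ ^ α`,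
whose antidiagonals sum to `(y - y) ^ N / Γ(α N + 1)`; so they add up to `1` as real numbers.
Their positive parts add up to `1` as well, hence none of them is negative.
-/

open scoped Nat
open MeasureTheory ProbabilityTheory

/-- Three-parameter (Prabhakar) Mittag-Leffler function. -/
noncomputable def prabhakar (α β δ z : ℝ) : ℝ :=
  ∑' n : ℕ, (∏ i ∈ Finset.range n, (δ + i)) * z ^ n / ((n ! : ℝ) * Real.Gamma (α * n + β))

open Finset Polynomial Filter Topology

section Multinomial

variable {R ι : Type*} [CommSemiring R]

theorem coeff_pow_sum_C_mul_X_pow_eq_sum_piFinset (t : Finset ι) (c : ι → R) (w : ι → ℕ)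
    (n j : ℕ) :
    ((∑ i ∈ t, C (c i) * X ^ w i) ^ n).coeff j =
      ∑ p ∈ (Fintype.piFinset fun _ : Fin n => t) with ∑ m, w (p m) = j, ∏ m, c (p m) := by
  rw [← Fin.prod_const, prod_univ_sum, finsetSum_coeff, sum_filter]
  refine sum_congr rfl fun p _ => ?_
  rw [prod_mul_distrib, ← map_prod, prod_pow_eq_pow_sum, coeff_C_mul_X_pow]
  exact if_congr eq_comm rfl rfl

theorem coeff_pow_sum_C_mul_X_pow_eq_sum_piAntidiag [DecidableEq ι] (t : Finset ι) (c : ι → R)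
    (w : ι → ℕ) (n j : ℕ) :
    ((∑ i ∈ t, C (c i) * X ^ w i) ^ n).coeff j =
      ∑ a ∈ t.piAntidiag n with ∑ i ∈ t, w i * a i = j,
        Nat.multinomial t a * ∏ i ∈ t, c i ^ a i := by
  rw [sum_pow_eq_sum_piAntidiag, finsetSum_coeff, sum_filter]
  refine sum_congr rfl fun a _ => ?_
  simp_rw [mul_pow, ← C_pow, ← pow_mul]
  rw [prod_mul_distrib, ← map_prod, prod_pow_eq_pow_sum, ← C_eq_natCast, ← mul_assoc, ← C_mul,
    coeff_C_mul_X_pow]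
  exact if_congr eq_comm rfl rfl

end Multinomial

theorem sum_Icc_one_eq_sum_fin {M : Type*} [AddCommMonoid M] (k : ℕ) (f : ℕ → M) :
    ∑ v ∈ Icc 1 k, f v = ∑ s : Fin k, f (s + 1) := by
  rw [Fin.sum_univ_eq_sum_range (fun i => f (i + 1)), range_eq_Ico, sum_Ico_add', zero_add,
    Ico_add_one_right_eq_Icc]

/-- `a s` is the number of summands equal to `s + 1` (the paper's `α_{s+1}`). -/
def multinomialSum {R : Type*} [CommSemiring R] (k n j : ℕ) (g : ℕ → R) : R :=
  ∑ a ∈ (Fintype.piFinset fun _ : Fin k => range (j + 1)) with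
      ∑ s, a s = n ∧ ∑ s : Fin k, ((s : ℕ) + 1) * a s = j,
    Nat.multinomial univ a * ∏ s : Fin k, g (s + 1) ^ a s

theorem multinomialSum_div_pow {K : Type*} [Semifield K] (k n j : ℕ) (g : ℕ → K) (c : K) :
    multinomialSum k n j (fun v => g v / c) = multinomialSum k n j g / c ^ n := by
  rw [multinomialSum, multinomialSum, sum_div]
  refine sum_congr rfl fun a ha => ?_
  simp_rw [div_pow]
  rw [prod_div_distrib, prod_pow_eq_pow_sum, (mem_filter.1 ha).2.1, mul_div_assoc]

theorem multinomialSum_nonneg {k n j : ℕ} {g : ℕ → ℝ} (hg : ∀ v, 0 ≤ g v) :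
    0 ≤ multinomialSum k n j g :=
  sum_nonneg fun _ _ => mul_nonneg (Nat.cast_nonneg _) (prod_nonneg fun _ _ => pow_nonneg (hg _) _)

theorem sum_piFinset_Icc_prod_eq_multinomialSum {R : Type*} [CommSemiring R] (k n j : ℕ)
    (g : ℕ → R) :
    ∑ p ∈ (Fintype.piFinset fun _ : Fin n => Icc 1 k) with ∑ m, p m = j, ∏ m, g (p m) =
      multinomialSum k n j g := by
  have hP : ∑ v ∈ Icc 1 k, C (g v) * X ^ v = ∑ s : Fin k, C (g (s + 1)) * X ^ ((s : ℕ) + 1) :=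
    sum_Icc_one_eq_sum_fin k fun v => C (g v) * X ^ v
  have h := coeff_pow_sum_C_mul_X_pow_eq_sum_piFinset (Icc 1 k) g id n j
  simp only [id] at h
  rw [hP, coeff_pow_sum_C_mul_X_pow_eq_sum_piAntidiag] at h
  rw [← h]
  refine sum_congr (Finset.ext fun a => ?_) fun _ _ => rfl
  simp only [mem_filter, mem_piAntidiag, Fintype.mem_piFinset, mem_range, mem_univ, ne_eq,
    imp_true_iff, and_true]
  constructor
  · rintro ⟨hn, hj⟩
    refine ⟨fun s => ?_, hn, hj⟩
    have := hj ▸ single_le_sum (f := fun s : Fin k => ((s : ℕ) + 1) * a s)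
      (fun _ _ => Nat.zero_le _) (mem_univ s)
    nlinarith
  · exact fun h => h.2

theorem setOf_sum_range_eq_eq_empty {Ω : Type*} {X : ℕ → Ω → ℕ} (hX : ∀ i ω, 1 ≤ X i ω)
    {r j : ℕ} (hjr : j < r) : {ω | ∑ i ∈ range r, X i ω = j} = ∅ := by
  refine Set.eq_empty_of_forall_notMem fun ω hω => hjr.not_ge ?_
  have := card_nsmul_le_sum (range r) (X · ω) 1 fun i _ => hX i ω
  rwa [card_range, smul_eq_mul, mul_one, hω] at this

section Measure

variable {Ω : Type*} [MeasurableSpace Ω] {μ : Measure Ω}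

theorem measure_sum_eq_sum_prod_measure {ι : Type*} [Fintype ι] [DecidableEq ι] {X : ι → Ω → ℕ}
    (hXmeas : ∀ i, Measurable (X i)) (hXindep : iIndepFun X μ) {t : Finset ℕ}
    (hXval : ∀ i ω, X i ω ∈ t) (j : ℕ) :
    μ {ω | ∑ i, X i ω = j} =
      ∑ p ∈ (Fintype.piFinset fun _ : ι => t) with ∑ i, p i = j, ∏ i, μ {ω | X i ω = p i} := by
  set V : Ω → ι → ℕ := fun ω i => X i ω
  have hV : Measurable V := measurable_pi_lambda _ hXmeas
  have hevent : {ω | ∑ i, X i ω = j} =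
      V ⁻¹' ↑((Fintype.piFinset fun _ : ι => t).filter fun p => ∑ i, p i = j) := by
    ext ω
    simp [V, Fintype.mem_piFinset, hXval]
  rw [hevent, ← sum_measure_preimage_singleton _ fun p _ => hV (measurableSet_singleton p)]
  refine sum_congr rfl fun p _ => ?_
  have hfiber : V ⁻¹' {p} = ⋂ i ∈ (univ : Finset ι), X i ⁻¹' {p i} := by
    ext ω
    simp [V, funext_iff]
  rw [hfiber, hXindep.measure_inter_preimage_eq_mul _ fun i _ => measurableSet_singleton _]
  rfl

theorem measure_setOf_mem_eq_tsum_of_indepFun {E : Type*} [MeasurableSpace E] {N : Ω → ℕ}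
    {Y : Ω → E} (hN : Measurable N) (hY : Measurable Y) (hNY : IndepFun N Y μ) {A : ℕ → Set E}
    (hA : ∀ r, MeasurableSet (A r)) :
    μ {ω | Y ω ∈ A (N ω)} = ∑' r, μ {ω | N ω = r} * μ {ω | Y ω ∈ A r} := by
  have hevent : {ω | Y ω ∈ A (N ω)} = ⋃ r, N ⁻¹' {r} ∩ Y ⁻¹' A r := by
    ext ω
    simp
  have hdisj : Pairwise (Function.onFun Disjoint fun r => N ⁻¹' {r} ∩ Y ⁻¹' A r) :=
    fun r r' hrr' => Set.disjoint_left.2 fun ω hr hr' => hrr' (hr.1.symm.trans hr'.1)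
  rw [hevent, measure_iUnion hdisj fun r => (hN (measurableSet_singleton r)).inter (hY (hA r))]
  exact tsum_congr fun r =>
    hNY.measure_inter_preimage_eq_mul _ _ (measurableSet_singleton r) (hA r)

theorem measure_sum_range_eq_multinomialSum {X : ℕ → Ω → ℕ} (hXmeas : ∀ i, Measurable (X i))
    (hXindep : iIndepFun X μ) {k : ℕ} (hXval : ∀ i ω, X i ω ∈ Icc 1 k) {q : ℕ → ℝ}
    (hq : ∀ v ∈ Icc 1 k, 0 ≤ q v)
    (hX : ∀ i, ∀ v ∈ Icc 1 k, μ {ω | X i ω = v} = ENNReal.ofReal (q v)) (n j : ℕ) :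
    μ {ω | ∑ i ∈ range n, X i ω = j} =
      ENNReal.ofReal (multinomialSum k n j q) := by
  have hevent : {ω | ∑ i ∈ range n, X i ω = j} = {ω | ∑ i : Fin n, X i ω = j} := by
    ext ω
    rw [Set.mem_ofPred_eq, Set.mem_ofPred_eq, Fin.sum_univ_eq_sum_range fun i => X i ω]
  rw [hevent, measure_sum_eq_sum_prod_measure (X := fun i : Fin n => X i) (fun i => hXmeas i)
    (hXindep.precomp Fin.val_injective) (fun i ω => hXval i ω) j,
    ← sum_piFinset_Icc_prod_eq_multinomialSum, ENNReal.ofReal_sum_of_nonneg]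
  · refine sum_congr rfl fun p hp => ?_
    have hpk : ∀ m, p m ∈ Icc 1 k := Fintype.mem_piFinset.1 (mem_filter.1 hp).1
    rw [ENNReal.ofReal_prod_of_nonneg fun m _ => hq _ (hpk m)]
    exact prod_congr rfl fun m _ => hX m _ (hpk m)
  · exact fun p hp => prod_nonneg fun m _ => hq _ (Fintype.mem_piFinset.1 (mem_filter.1 hp).1 m)

end Measure

theorem HasSum.sum_antidiagonal {E : Type*} [AddCommMonoid E] [TopologicalSpace E]
    [ContinuousAdd E] [RegularSpace E] {f : ℕ × ℕ → E} {a : E} (hf : HasSum f a) :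
    HasSum (fun n => ∑ p ∈ antidiagonal n, f p) a := by
  refine HasSum.sigma (HasAntidiagonal.sigmaAntidiagonalEquivProd.hasSum_iff.2 hf) fun n => ?_
  exact (antidiagonal n).hasSum f

theorem summable_of_nonneg_of_summable_sum_antidiagonal {f : ℕ × ℕ → ℝ} (hf : 0 ≤ f)
    (h : Summable fun n => ∑ p ∈ antidiagonal n, f p) : Summable f := by
  rw [← HasAntidiagonal.sigmaAntidiagonalEquivProd.summable_iff]
  refine (summable_sigma_of_nonneg fun _ => hf _).2
    ⟨fun n => (hasSum_fintype _).summable, h.congr fun n => ?_⟩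
  rw [tsum_fintype]
  exact ((antidiagonal n).sum_coe_sort f).symm

section Gamma

variable {α : ℝ}

theorem tendsto_pow_div_Gamma_mul_add_one (hα : 0 < α) {c : ℝ} (hc : 1 ≤ c) :
    Tendsto (fun n : ℕ => c ^ n / Real.Gamma (α * n + 1)) atTop (𝓝 0) := by
  set d := c ^ α⁻¹
  have hd : 1 ≤ d := Real.one_le_rpow hc (inv_nonneg.2 hα.le)
  have hm : Tendsto (fun n : ℕ => ⌊α * n⌋₊) atTop atTop :=
    tendsto_nat_floor_atTop.comp (tendsto_natCast_atTop_atTop.const_mul_atTop hα)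
  have hlim := ((FloorSemiring.tendsto_pow_div_factorial_atTop d).comp hm).const_mul d
  rw [mul_zero] at hlim
  refine squeeze_zero' (Eventually.of_forall fun n => by positivity) ?_ hlim
  filter_upwards [hm.eventually_ge_atTop 1] with n hn
  set m := ⌊α * n⌋₊
  have hαn : 0 ≤ α * n := by positivity
  have hpow : c ^ n ≤ d ^ (m + 1) := by
    calc c ^ n = d ^ (α * n) := by
          rw [← Real.rpow_mul (by linarith), inv_mul_cancel_left₀ hα.ne', Real.rpow_natCast]
      _ ≤ d ^ ((m + 1 : ℕ) : ℝ) := by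
          refine Real.rpow_le_rpow_of_exponent_le hd ?_
          push_cast
          exact (Nat.lt_floor_add_one _).le
      _ = d ^ (m + 1) := Real.rpow_natCast _ _
  have hGamma : (m ! : ℝ) ≤ Real.Gamma (α * n + 1) := by
    rw [← Real.Gamma_nat_eq_factorial]
    refine Real.Gamma_strictMonoOn_Ici.monotoneOn ?_ ?_ ?_
    · simp only [Set.mem_Ici]
      exact_mod_cast Nat.succ_le_succ hn
    · simp only [Set.mem_Ici]
      have : (1 : ℝ) ≤ m := by exact_mod_cast hn
      linarith [Nat.floor_le hαn]
    · linarith [Nat.floor_le hαn]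
  calc c ^ n / Real.Gamma (α * n + 1) ≤ d ^ (m + 1) / m ! := by gcongr
    _ = d * (d ^ m / m !) := by ring

theorem summable_pow_div_Gamma_mul_add_one (hα : 0 < α) {c : ℝ} (hc : 0 ≤ c) :
    Summable fun n : ℕ => c ^ n / Real.Gamma (α * n + 1) := by
  refine Summable.of_norm_bounded_eventually summable_geometric_two ?_
  rw [Nat.cofinite_eq_atTop]
  have h := (tendsto_pow_div_Gamma_mul_add_one hα (c := 2 * c + 1) (by linarith)).eventually
    (gt_mem_nhds one_pos)
  filter_upwards [h] with n hn
  have hΓ : 0 < Real.Gamma (α * n + 1) := Real.Gamma_pos_of_pos (by positivity)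
  rw [div_lt_one hΓ] at hn
  rw [Real.norm_of_nonneg (by positivity)]
  calc c ^ n / Real.Gamma (α * n + 1) ≤ c ^ n / (2 * c + 1) ^ n := by gcongr
    _ ≤ (1 / 2) ^ n := by
        rw [← div_pow]
        exact pow_le_pow_left₀ (by positivity) (by rw [div_le_iff₀ (by linarith)]; linarith) n

end Gamma

noncomputable def binomGammaTerm (α x z : ℝ) (p : ℕ × ℕ) : ℝ :=
  (p.1 + p.2).choose p.1 * x ^ p.1 * z ^ p.2 / Real.Gamma (α * (p.1 + p.2 : ℕ) + 1)

section BinomGammaTerm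

variable {α : ℝ}

theorem sum_antidiagonal_binomGammaTerm (x z : ℝ) (n : ℕ) :
    ∑ p ∈ antidiagonal n, binomGammaTerm α x z p = (x + z) ^ n / Real.Gamma (α * n + 1) := by
  rw [(Commute.all x z).add_pow', sum_div]
  refine sum_congr rfl fun p hp => ?_
  rw [binomGammaTerm, mem_antidiagonal.1 hp, nsmul_eq_mul, mul_assoc]

theorem abs_binomGammaTerm (hα : 0 ≤ α) (x z : ℝ) (p : ℕ × ℕ) :
    |binomGammaTerm α x z p| = binomGammaTerm α |x| |z| p := by
  have hΓ : 0 < Real.Gamma (α * (p.1 + p.2 : ℕ) + 1) := Real.Gamma_pos_of_pos (by positivity)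
  simp only [binomGammaTerm, abs_div, abs_mul, abs_pow, Nat.abs_cast, abs_of_pos hΓ]

theorem hasSum_binomGammaTerm (hα : 0 < α) (x z : ℝ) :
    HasSum (binomGammaTerm α x z) (∑' n : ℕ, (x + z) ^ n / Real.Gamma (α * n + 1)) := by
  have habs : Summable fun p => |binomGammaTerm α x z p| := by
    simp_rw [abs_binomGammaTerm hα.le]
    refine summable_of_nonneg_of_summable_sum_antidiagonal
      (fun p => by rw [← abs_binomGammaTerm hα.le]; exact abs_nonneg _) ?_
    simp_rw [sum_antidiagonal_binomGammaTerm]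
    exact summable_pow_div_Gamma_mul_add_one hα (by positivity)
  have h := habs.of_abs.hasSum
  rwa [← h.sum_antidiagonal.tsum_eq, tsum_congr (sum_antidiagonal_binomGammaTerm x z)] at h

theorem tsum_binomGammaTerm_left (x z : ℝ) (n : ℕ) :
    ∑' l, binomGammaTerm α x z (n, l) = x ^ n * prabhakar α (n * α + 1) (n + 1) z := by
  rw [prabhakar, ← tsum_mul_left]
  refine tsum_congr fun l => ?_
  have hasc : ∏ i ∈ range l, ((n : ℝ) + 1 + i) = l ! * (n + l).choose n := by
    rw [Nat.choose_symm_add]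
    exact_mod_cast (Nat.ascFactorial_eq_prod_range (n + 1) l).symm.trans
      (Nat.ascFactorial_eq_factorial_mul_choose n l)
  have hΓ : α * l + (n * α + 1) = α * (n + l : ℕ) + 1 := by push_cast; ring
  rw [hasc, hΓ, binomGammaTerm]
  field_simp

theorem hasSum_pow_mul_prabhakar (hα : 0 < α) (x : ℝ) :
    HasSum (fun n : ℕ => x ^ n * prabhakar α (n * α + 1) (n + 1) (-x)) 1 := by
  have h := hasSum_binomGammaTerm hα x (-x)
  have hone : ∑' n : ℕ, (x + -x) ^ n / Real.Gamma (α * n + 1) = 1 := by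
    rw [tsum_eq_single 0 fun n hn => by simp [zero_pow hn]]
    simp
  rw [hone] at h
  refine h.prod_fiberwise fun n => ?_
  rw [← tsum_binomGammaTerm_left]
  exact (h.summable.prod_factor n).hasSum

end BinomGammaTerm

theorem nonneg_of_hasSum_of_tsum_ofReal {ι : Type*} {t : ι → ℝ} {a : ℝ} (ha : 0 ≤ a)
    (ht : HasSum t a) (h : ∑' i, ENNReal.ofReal (t i) = ENNReal.ofReal a) (i : ι) :
    0 ≤ t i := by
  have hu : HasSum (fun i => (ENNReal.ofReal (t i)).toReal) a := by
    have := ENNReal.hasSum_toReal (h ▸ ENNReal.ofReal_ne_top)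
    rwa [← ENNReal.tsum_toReal_eq fun _ => ENNReal.ofReal_ne_top, h,
      ENNReal.toReal_ofReal ha] at this
  by_contra! hi
  refine (hasSum_lt (fun i => ?_) (hi.trans_le ENNReal.toReal_nonneg) ht hu).false
  rw [ENNReal.toReal_ofReal']
  exact le_max_left _ _

theorem nonneg_of_measure_eq_ofReal_of_hasSum {Ω : Type*} [MeasurableSpace Ω] {μ : Measure Ω}
    [IsProbabilityMeasure μ] {N : Ω → ℕ} (hN : Measurable N) {t : ℕ → ℝ} (ht : HasSum t 1)
    (hNt : ∀ n, μ {ω | N ω = n} = ENNReal.ofReal (t n)) (n : ℕ) : 0 ≤ t n := by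
  refine nonneg_of_hasSum_of_tsum_ofReal zero_le_one ht ?_ n
  rw [← tsum_congr hNt, ENNReal.ofReal_one, ← tsum_univ]
  refine (tsum_measure_preimage_singleton Set.countable_univ
    fun n _ => hN (measurableSet_singleton n)).trans ?_
  rw [Set.preimage_univ, measure_univ]

theorem nhgfcp_pmf_general {Ω : Type*} [MeasurableSpace Ω] (μ : Measure Ω) [IsProbabilityMeasure μ]
    (α : ℝ) (hα : α ∈ Set.Ioc (0 : ℝ) 1)
    (k : ℕ) (Λf : ℕ → ℝ) (hΛf : ∀ j, 0 ≤ Λf j)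
    (Λ : ℝ) (hΛpos : 0 < Λ)
    (N : Ω → ℕ) (X : ℕ → Ω → ℕ)
    (hNmeas : Measurable N) (hXmeas : ∀ i, Measurable (X i))
    (hN : ∀ n : ℕ, μ {ω | N ω = n} =
      ENNReal.ofReal (Λ ^ ((n : ℝ) * α) * prabhakar α ((n : ℝ) * α + 1) ((n : ℝ) + 1) (-(Λ ^ α))))
    (hXval : ∀ i ω, X i ω ∈ Finset.Icc 1 k)
    (hX : ∀ i, ∀ j ∈ Finset.Icc 1 k, μ {ω | X i ω = j} = ENNReal.ofReal (Λf j / Λ))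
    (hXindep : iIndepFun X μ)
    (hNX : IndepFun N (fun ω => fun i : ℕ => X i ω) μ)
    (j : ℕ) :
    μ {ω | ∑ i ∈ Finset.range (N ω), X i ω = j}
      = ENNReal.ofReal (∑ r ∈ Finset.range (j + 1),
          ∑ a ∈ Finset.filter
              (fun a : Fin k → ℕ => (∑ s, a s) = r ∧ (∑ s : Fin k, ((s : ℕ) + 1) * a s) = j)
              (Fintype.piFinset fun _ : Fin k => Finset.range (j + 1)),
            (Nat.multinomial Finset.univ a : ℝ) * (∏ s : Fin k, Λf ((s : ℕ) + 1) ^ a s)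
              * Λ ^ (-((r : ℝ) * (1 - α)))
              * prabhakar α ((r : ℝ) * α + 1) ((r : ℝ) + 1) (-(Λ ^ α))) := by
  have hpmf : HasSum (fun n : ℕ =>
      Λ ^ ((n : ℝ) * α) * prabhakar α ((n : ℝ) * α + 1) ((n : ℝ) + 1) (-(Λ ^ α))) 1 := by
    convert hasSum_pow_mul_prabhakar hα.1 (Λ ^ α) using 3 with n
    rw [← Real.rpow_natCast, ← Real.rpow_mul hΛpos.le, mul_comm]
  have hE : ∀ r : ℕ, 0 ≤ prabhakar α ((r : ℝ) * α + 1) ((r : ℝ) + 1) (-(Λ ^ α)) := fun r =>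
    nonneg_of_mul_nonneg_right (nonneg_of_measure_eq_ofReal_of_hasSum hNmeas hpmf hN r)
      (by positivity)
  have hS := measure_sum_range_eq_multinomialSum hXmeas hXindep hXval
    (fun v _ => div_nonneg (hΛf v) hΛpos.le) hX
  have hzero : ∀ r ∉ range (j + 1),
      μ {ω | N ω = r} * μ {ω | ∑ i ∈ range r, X i ω = j} = 0 := by
    intro r hr
    rw [setOf_sum_range_eq_eq_empty (fun i ω => (mem_Icc.1 (hXval i ω)).1)
      (by simpa using hr), measure_empty, mul_zero]
  have hcompound : μ {ω | ∑ i ∈ range (N ω), X i ω = j} =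
      ∑' r, μ {ω | N ω = r} * μ {ω | ∑ i ∈ range r, X i ω = j} :=
    measure_setOf_mem_eq_tsum_of_indepFun (A := fun r => {x | ∑ i ∈ range r, x i = j}) hNmeas
      (measurable_pi_lambda _ hXmeas) hNX fun r => measurableSet_eq_fun
        (measurable_sum _ fun i _ => measurable_pi_apply i) measurable_const
  simp_rw [← sum_mul]
  change _ = ENNReal.ofReal (∑ r ∈ range (j + 1), multinomialSum k r j Λf
    * Λ ^ (-((r : ℝ) * (1 - α))) * prabhakar α (r * α + 1) (r + 1) (-(Λ ^ α)))
  rw [hcompound, tsum_eq_sum hzero, ENNReal.ofReal_sum_of_nonneg fun r _ =>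
    mul_nonneg (mul_nonneg (multinomialSum_nonneg hΛf) (by positivity)) (hE r)]
  refine sum_congr rfl fun r _ => ?_
  have hpow : Λ ^ ((r : ℝ) * α) = Λ ^ (-((r : ℝ) * (1 - α))) * Λ ^ r := by
    rw [← Real.rpow_natCast, ← Real.rpow_add hΛpos]
    ring_nf
  rw [hN, hS, multinomialSum_div_pow, ← ENNReal.ofReal_mul (mul_nonneg (by positivity) (hE r)),
    hpow]
  congr 1
  field_simp

theorem nhgfcp_pmf {Ω : Type*} [MeasurableSpace Ω] (μ : Measure Ω) [IsProbabilityMeasure μ]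
    (α : ℝ) (hα : α ∈ Set.Ioc (0 : ℝ) 1)
    (k : ℕ) (hk : 1 ≤ k) (Λf : ℕ → ℝ) (hΛf : ∀ j, 0 ≤ Λf j)
    (Λ : ℝ) (hΛ : Λ = ∑ j ∈ Finset.Icc 1 k, Λf j) (hΛpos : 0 < Λ)
    (N : Ω → ℕ) (X : ℕ → Ω → ℕ)
    (hNmeas : Measurable N) (hXmeas : ∀ i, Measurable (X i))
    (hN : ∀ n : ℕ, μ {ω | N ω = n} =
      ENNReal.ofReal (Λ ^ ((n : ℝ) * α) * prabhakar α ((n : ℝ) * α + 1) ((n : ℝ) + 1) (-(Λ ^ α))))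
    (hXval : ∀ i ω, X i ω ∈ Finset.Icc 1 k)
    (hX : ∀ i, ∀ j ∈ Finset.Icc 1 k, μ {ω | X i ω = j} = ENNReal.ofReal (Λf j / Λ))
    (hXindep : iIndepFun X μ)
    (hNX : IndepFun N (fun ω => fun i : ℕ => X i ω) μ)
    (j : ℕ) (hj : 1 ≤ j) :
    μ {ω | ∑ i ∈ Finset.range (N ω), X i ω = j}
      = ENNReal.ofReal (∑ r ∈ Finset.range (j + 1),
          ∑ a ∈ Finset.filter
              (fun a : Fin k → ℕ => (∑ s, a s) = r ∧ (∑ s : Fin k, ((s : ℕ) + 1) * a s) = j)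
              (Fintype.piFinset fun _ : Fin k => Finset.range (j + 1)),
            (Nat.multinomial Finset.univ a : ℝ) * (∏ s : Fin k, Λf ((s : ℕ) + 1) ^ a s)
              * Λ ^ (-((r : ℝ) * (1 - α)))
              * prabhakar α ((r : ℝ) * α + 1) ((r : ℝ) + 1) (-(Λ ^ α))) :=
  nhgfcp_pmf_general μ α hα k Λf hΛf Λ hΛpos N X hNmeas hXmeas hN hXval hX hXindep hNX j
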